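/- arXiv:0709.2338 — 5 statements merged into one kernel-verified Lean document; each statement's English description precedes it below -/
import Mathlib

section
/- Let k be a field of characteristic p > 0. The center of the first Weyl algebra A₁(k) = k⟨x, y : yx - xy = 1⟩ contains x^p and y^p. -/
/-- The defining relation of the first Weyl algebra: `y * x = x * y + 1`,
where `x = ι false` and `y = ι true`. -/
inductive WeylRel (k : Type*) [CommRing k] :
    FreeAlgebra k Bool → FreeAlgebra k Bool → Prop
  | comm : WeylRel k (FreeAlgebra.ι k true * FreeAlgebra.ι k false)
      (FreeAlgebra.ι k false * FreeAlgebra.ι k true + 1)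

/-- The first Weyl algebra `A₁(k) = k⟨x, y : yx - xy = 1⟩`. -/
abbrev WeylAlgebra (k : Type*) [CommRing k] := RingQuot (WeylRel k)

private lemma pow_comm_aux₁ {A : Type*} [Ring A] {x y : A} (h : y * x = x * y + 1) :
    ∀ n : ℕ, y * x ^ (n+1) = x ^ (n+1) * y + (n+1) * x ^ n := by
  intro n
  induction n with
  | zero => simpa using h
  | succ n ih =>
    have e : y * x ^ (n+2) = (y * x ^ (n+1)) * x := by rw [pow_succ, mul_assoc]
    rw [e, ih, add_mul, mul_assoc, h]
    push_cast
    noncomm_ring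

private lemma pow_comm_aux₂ {A : Type*} [Ring A] {x y : A} (h : y * x = x * y + 1) :
    ∀ n : ℕ, x * y ^ (n+1) = y ^ (n+1) * x - (n+1) * y ^ n := by
  have h' : x * y = y * x - 1 := by rw [h, add_sub_cancel_right]
  intro n
  induction n with
  | zero => simpa using h'
  | succ n ih =>
    have e : x * y ^ (n+2) = (x * y ^ (n+1)) * y := by rw [pow_succ, mul_assoc]
    rw [e, ih, sub_mul, mul_assoc, h']
    push_cast
    noncomm_ring

private lemma mem_center_of_gen_comm {k : Type*} [CommRing k] (c : WeylAlgebra k)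
    (hX : c * RingQuot.mkRingHom (WeylRel k) (FreeAlgebra.ι k false)
        = RingQuot.mkRingHom (WeylRel k) (FreeAlgebra.ι k false) * c)
    (hY : c * RingQuot.mkRingHom (WeylRel k) (FreeAlgebra.ι k true)
        = RingQuot.mkRingHom (WeylRel k) (FreeAlgebra.ι k true) * c) :
    c ∈ Subring.center (WeylAlgebra k) := by
  rw [Subring.mem_center_iff]
  intro z
  obtain ⟨a, rfl⟩ := RingQuot.mkRingHom_surjective (WeylRel k) z
  induction a using FreeAlgebra.induction with
  | grade0 r =>
      have : RingQuot.mkRingHom (WeylRel k) (algebraMap k _ r)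
          = algebraMap k (WeylAlgebra k) r := by
        rw [← RingQuot.mkAlgHom_coe k (WeylRel k)]
        exact (RingQuot.mkAlgHom k (WeylRel k)).commutes r
      rw [this]
      exact Algebra.commutes r c
  | grade1 i =>
      cases i
      · exact hX.symm
      · exact hY.symm
  | mul a b ha hb => rw [map_mul, mul_assoc, hb, ← mul_assoc, ha, mul_assoc]
  | add a b ha hb => rw [map_add, add_mul, mul_add, ha, hb]

/-- In characteristic `p > 0`, the center of the first Weyl algebra contains
`x ^ p` and `y ^ p`. -/
theorem weylAlgebra_pow_p_mem_center (k : Type*) [Field k] (p : ℕ) [Fact p.Prime]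
    [CharP k p] :
    (RingQuot.mkRingHom (WeylRel k) (FreeAlgebra.ι k false)) ^ p ∈
      Subring.center (WeylAlgebra k) ∧
    (RingQuot.mkRingHom (WeylRel k) (FreeAlgebra.ι k true)) ^ p ∈
      Subring.center (WeylAlgebra k) := by
  set X := RingQuot.mkRingHom (WeylRel k) (FreeAlgebra.ι k false) with hXdef
  set Y := RingQuot.mkRingHom (WeylRel k) (FreeAlgebra.ι k true) with hYdef
  have hrel : Y * X = X * Y + 1 := by
    have := RingQuot.mkRingHom_rel (WeylRel.comm (k := k))
    simpa [hXdef, hYdef] using this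
  have hp0 : ((p : ℕ) : WeylAlgebra k) = 0 := by
    rw [← map_natCast (algebraMap k (WeylAlgebra k)) p, CharP.cast_eq_zero, map_zero]
  obtain ⟨m, hm⟩ : ∃ m, p = m + 1 :=
    ⟨p - 1, (Nat.succ_pred_eq_of_pos (Fact.out (p := p.Prime)).pos).symm⟩
  have hm0 : ((m : ℕ) + 1 : WeylAlgebra k) = 0 := by
    rw [hm] at hp0; push_cast at hp0; exact hp0
  have hYXp : Y * X ^ p = X ^ p * Y := by
    rw [hm, pow_comm_aux₁ hrel m, hm0, zero_mul, add_zero]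
  have hXYp : X * Y ^ p = Y ^ p * X := by
    rw [hm, pow_comm_aux₂ hrel m, hm0, zero_mul, sub_zero]
  constructor
  · exact mem_center_of_gen_comm _ ((Commute.refl X).pow_left p) hYXp.symm
  · exact mem_center_of_gen_comm _ hXYp.symm ((Commute.refl Y).pow_left p)
end

section
/- Let R be a ring with center Z(R), and G a finite group acting by ring automorphisms on R such that the restricted action of G on Z(R) is faithful. If R is a domain, then the center of the skew group ring R ∗ G equals the fixed ring Z(R)^G. -/
/-!
Write a central element `s` of `R ∗ G` as `∑ c_g u_g`. Commuting `s` with `r ∈ R` gives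
`r c_g = c_g g(r)` for every `g`; for central `z` this says `c_g (g(z) - z) = 0`, so in a domain
`c_g ≠ 0` forces `g` to fix `Z(R)`, hence `g = 1` by faithfulness. Thus `s = c_1` lies in `Z(R)`,
and commuting it with the `u_g` shows it is `G`-fixed. Conversely, an element of `Z(R)^G`
commutes with `R` and with every `u_g`, which generate `R ∗ G`.
-/

theorem smul_eq_of_mul_eq_mul_smul {R G : Type*} [Ring R] [NoZeroDivisors R] [SMul G R]
    {c : R} (hc : c ≠ 0) {g : G} (h : ∀ r, r * c = c * (g • r)) :
    ∀ z ∈ Subring.center R, g • z = z := by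
  intro z hz
  have : c * (g • z - z) = 0 := by
    rw [mul_sub, ← h, Subring.mem_center_iff.mp hz c, sub_self]
  exact sub_eq_zero.mp ((mul_eq_zero.mp this).resolve_left hc)

namespace Module.Basis

variable {R S ι : Type*} [Ring R] [Ring S] [Module R S] {i : R →+* S}

theorem mem_center_of_commute (hsmul : ∀ (r : R) (s : S), r • s = i r * s) (b : Basis ι R S)
    {t : S} (hi : ∀ r, Commute t (i r)) (hb : ∀ j, Commute t (b j)) :
    t ∈ Subring.center S := by
  let mulLeft : S →ₗ[R] S :=
    { toFun := (t * ·)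
      map_add' := mul_add t
      map_smul' := fun r x => by simp only [hsmul, RingHom.id_apply, ← mul_assoc, (hi r).eq] }
  let mulRight : S →ₗ[R] S :=
    { toFun := (· * t)
      map_add' := fun x y => add_mul x y t
      map_smul' := fun r x => by simp only [hsmul, RingHom.id_apply, mul_assoc] }
  have h : mulLeft = mulRight := b.ext fun j => (hb j).eq
  exact Subring.mem_center_iff.mpr fun x => (LinearMap.congr_fun h x).symm

theorem repr_mul_map_apply {G : Type*} [SMul G R]
    (hsmul : ∀ (r : R) (s : S), r • s = i r * s) (b : Basis G R S)
    (hcross : ∀ (g : G) (r : R), b g * i r = i (g • r) * b g) (x : S) (r : R) (g : G) :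
    b.repr (x * i r) g = b.repr x g * (g • r) := by
  let mulRight : S →ₗ[R] S :=
    { toFun := (· * i r)
      map_add' := fun x y => add_mul x y (i r)
      map_smul' := fun a x => by simp only [hsmul, RingHom.id_apply, mul_assoc] }
  have h :
      b.coord g ∘ₗ mulRight = LinearMap.toSpanSingleton R R (g • r) ∘ₗ b.coord g := by
    refine b.ext fun h => ?_
    by_cases hgh : h = g
    · subst hgh
      simp [mulRight, hcross, ← hsmul]
    · simp [mulRight, hcross, ← hsmul, hgh]
  exact LinearMap.congr_fun h x

theorem mul_repr_apply_of_mem_center {G : Type*} [SMul G R]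
    (hsmul : ∀ (r : R) (s : S), r • s = i r * s) (b : Basis G R S)
    (hcross : ∀ (g : G) (r : R), b g * i r = i (g • r) * b g) {s : S}
    (hs : s ∈ Subring.center S) (r : R) (g : G) :
    r * b.repr s g = b.repr s g * (g • r) := by
  rw [← repr_mul_map_apply hsmul b hcross, ← Subring.mem_center_iff.mp hs, ← hsmul,
    map_smul, Finsupp.smul_apply, smul_eq_mul]

theorem support_repr_subset_one_of_mem_center [NoZeroDivisors R] {G : Type*} [One G]
    [SMul G R] (hfaithful : ∀ g : G, (∀ z ∈ Subring.center R, g • z = z) → g = 1)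
    (hsmul : ∀ (r : R) (s : S), r • s = i r * s) (b : Basis G R S)
    (hcross : ∀ (g : G) (r : R), b g * i r = i (g • r) * b g) {s : S}
    (hs : s ∈ Subring.center S) : (b.repr s).support ⊆ {1} := fun g hg =>
  Finset.mem_singleton.mpr <| hfaithful g <| smul_eq_of_mul_eq_mul_smul
    (Finsupp.mem_support_iff.mp hg) (b.mul_repr_apply_of_mem_center hsmul hcross hs · g)

end Module.Basis

theorem center_skewGroupRing_general {R S G : Type*} [Ring R] [Ring S] [Group G]
    [MulSemiringAction G R]
    (hdom : ∀ a b : R, a * b = 0 → a = 0 ∨ b = 0)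
    (hfaithful : ∀ g : G, (∀ z ∈ Subring.center R, g • z = z) → g = 1)
    (i : R →+* S) (u : G →* Sˣ)
    (hcross : ∀ (g : G) (r : R), (u g : S) * i r = i (g • r) * (u g : S))
    [Module R S] (hsmul : ∀ (r : R) (s : S), r • s = i r * s)
    (b : Module.Basis G R S) (hb : ∀ g : G, b g = (u g : S)) :
    ∀ s : S, s ∈ Subring.center S ↔
      ∃ z ∈ Subring.center R, (∀ g : G, g • z = z) ∧ s = i z := by
  have : NoZeroDivisors R := ⟨hdom _ _⟩
  have hcross' : ∀ (g : G) (r : R), b g * i r = i (g • r) * b g := by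
    simpa only [← hb] using hcross
  intro s
  constructor
  · intro hs
    have hsupp : b.repr s = Finsupp.single 1 (b.repr s 1) := Finsupp.eq_single_iff.mpr
      ⟨b.support_repr_subset_one_of_mem_center hfaithful hsmul hcross' hs, rfl⟩
    have hs_eq : s = i (b.repr s 1) := by
      conv_lhs => rw [← b.repr.symm_apply_apply s, hsupp, b.repr_symm_single]
      rw [hsmul, hb, map_one u, Units.val_one, mul_one]
    refine ⟨b.repr s 1, Subring.mem_center_iff.mpr fun r => by
      simpa using b.mul_repr_apply_of_mem_center hsmul hcross' hs r 1,
      fun g => ?_, hs_eq⟩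
    have h := Subring.mem_center_iff.mp hs (b g)
    rw [hs_eq, hcross', ← hsmul, ← hsmul] at h
    simpa using congrArg (b.repr · g) h
  · rintro ⟨z, hz, hfix, rfl⟩
    refine b.mem_center_of_commute hsmul (fun r => ?_) (fun g => ?_)
    · rw [Commute, SemiconjBy, ← map_mul, ← map_mul, Subring.mem_center_iff.mp hz r]
    · rw [Commute, SemiconjBy, hcross', hfix]

/-- Let `R` be a domain, `G` a finite group acting on `R` by ring automorphisms whose
restriction to the center `Z(R)` is faithful, and let `S` be the skew group ring `R ∗ G`:
`S` is free as a left `R`-module on the units `u g` (`g ∈ G`), with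
`(u g) * i r = i (g • r) * (u g)`.  Then the center of `S` is exactly the image of the
fixed ring `Z(R)^G`. -/
theorem center_skewGroupRing {R S G : Type*} [Ring R] [Ring S] [Group G] [Finite G]
    [MulSemiringAction G R]
    (hdom : ∀ a b : R, a * b = 0 → a = 0 ∨ b = 0)
    (hfaithful : ∀ g : G, (∀ z ∈ Subring.center R, g • z = z) → g = 1)
    (i : R →+* S) (u : G →* Sˣ)
    (hcross : ∀ (g : G) (r : R), (u g : S) * i r = i (g • r) * (u g : S))
    [Module R S] (hsmul : ∀ (r : R) (s : S), r • s = i r * s)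
    (b : Module.Basis G R S) (hb : ∀ g : G, b g = (u g : S)) :
    ∀ s : S, s ∈ Subring.center S ↔
      ∃ z ∈ Subring.center R, (∀ g : G, g • z = z) ∧ s = i z :=
  center_skewGroupRing_general hdom hfaithful i u hcross hsmul b hb
end

section
/- Let S be a commutative ring, G a finite group acting on S by ring automorphisms, t a maximal ideal of S whose G-orbit {g(t) : g ∈ G} consists of |G| pairwise distinct (hence pairwise comaximal) maximal ideals, and U a module over the skew group ring S ∗ G. If U₁ := Ann_U(t) is nonzero and U = Σ_{g∈G} g·U₁, then the sum is direct and dim U = |G| · dim U₁ whenever S is an algebra over a field and U₁ is finite dimensional. -/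
/-!
Since `U` is an `S ∗ G`-module, `g • U₁` is killed by the maximal ideal `g(t)`. These ideals
are pairwise distinct, hence pairwise comaximal, and torsion submodules for pairwise comaximal
ideals are independent (Chinese remainder theorem). So the sum is direct, and each summand
`g • U₁` is isomorphic to `U₁` as a `k`-space.
-/

open Submodule

theorem iSupIndep.restrictScalars {ι R S M : Type*} [Semiring R] [Semiring S] [AddCommMonoid M]
    [Module R M] [Module S M] [SMul R S] [IsScalarTower R S M] {p : ι → Submodule S M}
    (hp : iSupIndep p) : iSupIndep fun i => (p i).restrictScalars R := by
  intro i
  simpa only [disjoint_iff, ← restrictScalars_iSup, ← restrictScalars_inf,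
    restrictScalars_eq_bot_iff] using disjoint_iff.mp (hp i)

theorem Submodule.iSupIndep_torsionBySet_ideal {ι R M : Type*} [Finite ι] [CommRing R]
    [AddCommGroup M] [Module R M] {p : ι → Ideal R}
    (hp : Pairwise fun i j => p i ⊔ p j = ⊤) :
    iSupIndep fun i => torsionBySet R M (p i) := by
  have := Fintype.ofFinite ι
  exact iSupIndep_iff_supIndep_univ.mpr <| supIndep_torsionBySet_ideal fun i _ j _ hij => hp hij

theorem DirectSum.IsInternal.finrank_eq_sum {ι K V : Type*} [Fintype ι] [DecidableEq ι]
    [DivisionRing K] [AddCommGroup V] [Module K V] {W : ι → Submodule K V}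
    [∀ i, FiniteDimensional K (W i)] (hW : DirectSum.IsInternal W) :
    Module.finrank K V = ∑ i, Module.finrank K (W i) := by
  rw [← (LinearEquiv.ofBijective (coeLinearMap W) hW).finrank_eq, Module.finrank_directSum]

theorem smul_mem_torsionBySet_map {G S U : Type*} [Group G] [CommRing S] [MulSemiringAction G S]
    [AddCommGroup U] [Module S U] [DistribMulAction G U]
    (hcompat : ∀ (g : G) (s : S) (u : U), g • (s • u) = (g • s) • (g • u))
    {I : Ideal S} {u : U} (hu : u ∈ torsionBySet S U I) (g : G) :
    g • u ∈ torsionBySet S U (I.map (MulSemiringAction.toRingHom G S g)) := by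
  suffices I.map (MulSemiringAction.toRingHom G S g) ≤ Ideal.torsionOf S U (g • u) from
    mem_torsionBySet_iff _ _ |>.mpr fun ⟨s, hs⟩ => this hs
  rw [Ideal.map_le_iff_le_comap]
  intro s hs
  change (g • s) • g • u = 0
  rw [← hcompat, mem_torsionBySet_iff _ _ |>.mp hu ⟨s, hs⟩, smul_zero]

theorem annihilator_sum_direct_general {k S G U : Type*} [Field k] [CommRing S] [Algebra k S]
    [Group G] [Fintype G] [MulSemiringAction G S]
    [AddCommGroup U] [Module S U] [Module k U] [IsScalarTower k S U]
    [DistribMulAction G U] [SMulCommClass G k U]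
    (hcompat : ∀ (g : G) (s : S) (u : U), g • (s • u) = (g • s) • (g • u))
    (t : Ideal S) (ht : t.IsMaximal)
    (hdistinct : Function.Injective fun g : G => Ideal.map (MulSemiringAction.toRingHom G S g) t)
    (U₁ : Submodule k U) (hU₁ : ∀ u : U, u ∈ U₁ ↔ ∀ s ∈ t, s • u = 0)
    [FiniteDimensional k ↥U₁]
    (hsum : ⨆ g : G, U₁.map (DistribMulAction.toLinearMap k U g) = ⊤) :
    iSupIndep (fun g : G => U₁.map (DistribMulAction.toLinearMap k U g)) ∧
      Module.finrank k U = Fintype.card G * Module.finrank k ↥U₁ := by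
  classical
  set T : G → Ideal S := fun g => t.map (MulSemiringAction.toRingHom G S g)
  have hcomax : Pairwise fun g h => T g ⊔ T h = ⊤ := fun g h hgh =>
    (ht.map_bijective _ (MulSemiringAction.toRingEquiv G S g).bijective).coprime_of_ne
      (ht.map_bijective _ (MulSemiringAction.toRingEquiv G S h).bijective) (hdistinct.ne hgh)
  have hann : ∀ g, ∀ u ∈ U₁, g • u ∈ torsionBySet S U (T g) := fun g u hu =>
    smul_mem_torsionBySet_map hcompat
      ((mem_torsionBySet_iff _ _).mpr fun s => (hU₁ u).mp hu s s.2) g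
  have hindep : iSupIndep fun g : G => U₁.map (DistribSMul.toLinearMap k U g) :=
    ((iSupIndep_torsionBySet_ideal hcomax).restrictScalars (R := k)).mono
      fun g => Submodule.map_le_iff_le_comap.mpr fun u hu => hann g u hu
  refine ⟨hindep, ?_⟩
  calc Module.finrank k U
      = ∑ g : G, Module.finrank k (U₁.map (DistribMulAction.toLinearEquiv k U g).toLinearMap) :=
        ((DirectSum.isInternal_submodule_iff_iSupIndep_and_iSup_eq_top _).mpr
          ⟨hindep, hsum⟩).finrank_eq_sum
    _ = Fintype.card G * Module.finrank k U₁ := by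
        simp only [LinearEquiv.finrank_map_eq, Finset.sum_const, Finset.card_univ, smul_eq_mul]

/-- Let `S` be a commutative algebra over a field `k`, `G` a finite group acting on `S` by
ring automorphisms, `t` a maximal ideal of `S` whose `G`-orbit consists of `|G|` pairwise
distinct maximal ideals, and `U` a module over the skew group ring `S ∗ G` (i.e. an
`S`-module with a compatible `G`-action).  If `U₁ = Ann_U(t)` is nonzero and
`U = ∑ g, g • U₁`, then the sum is direct and `dim U = |G| * dim U₁` whenever `U₁` is
finite dimensional over `k`. -/
theorem annihilator_sum_direct {k S G U : Type*} [Field k] [CommRing S] [Algebra k S]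
    [Group G] [Fintype G] [MulSemiringAction G S]
    [AddCommGroup U] [Module S U] [Module k U] [IsScalarTower k S U]
    [DistribMulAction G U] [SMulCommClass G k U]
    (hcompat : ∀ (g : G) (s : S) (u : U), g • (s • u) = (g • s) • (g • u))
    (t : Ideal S) (ht : t.IsMaximal)
    (hdistinct : Function.Injective fun g : G => Ideal.map (MulSemiringAction.toRingHom G S g) t)
    (U₁ : Submodule k U) (hU₁ : ∀ u : U, u ∈ U₁ ↔ ∀ s ∈ t, s • u = 0)
    (hne : U₁ ≠ ⊥) [FiniteDimensional k ↥U₁]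
    (hsum : ⨆ g : G, U₁.map (DistribMulAction.toLinearMap k U g) = ⊤) :
    iSupIndep (fun g : G => U₁.map (DistribMulAction.toLinearMap k U g)) ∧
      Module.finrank k U = Fintype.card G * Module.finrank k ↥U₁ :=
  annihilator_sum_direct_general hcompat t ht hdistinct U₁ hU₁ hsum
end

section
/- Let R = k⟨x, y, γ⟩ be the algebra over a field k of characteristic p > 2 with relations γ^r = 1, γx = ηxγ, γy = η⁻¹yγ, and [y,x] = 1 - Σ_{j=1}^{r-1} c_j γ^j, where η is a primitive r-th root of unity in k with gcd(r,p)=1 and c_j ∈ k. Then x^{pr} and y^{pr} are central in R. -/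
open FreeAlgebra in
/-- The defining relations of the rational Cherednik algebra of the type-A Kleinian
singularity: generators `x = ι 0`, `y = ι 1`, `γ = ι 2` with `γ^r = 1`, `γx = ηxγ`,
`γy = η⁻¹yγ` (written `η • (γ y) = y γ`), and `[y,x] = 1 - ∑_{j=1}^{r-1} c_j γ^j`. -/
inductive KleinRel (k : Type*) [CommRing k] (r : ℕ) (η : k) (c : ℕ → k) :
    FreeAlgebra k (Fin 3) → FreeAlgebra k (Fin 3) → Prop
  | pow : KleinRel k r η c (ι k (2 : Fin 3) ^ r) 1
  | gx : KleinRel k r η c (ι k (2 : Fin 3) * ι k (0 : Fin 3))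
      (algebraMap k _ η * (ι k (0 : Fin 3) * ι k (2 : Fin 3)))
  | gy : KleinRel k r η c (algebraMap k _ η * (ι k (2 : Fin 3) * ι k (1 : Fin 3)))
      (ι k (1 : Fin 3) * ι k (2 : Fin 3))
  | comm : KleinRel k r η c (ι k (1 : Fin 3) * ι k (0 : Fin 3))
      (ι k (0 : Fin 3) * ι k (1 : Fin 3) + 1 -
        ∑ j ∈ Finset.Icc 1 (r - 1), algebraMap k _ (c j) * ι k (2 : Fin 3) ^ j)

/-- In the rational Cherednik algebra `R = k⟨x,y,γ⟩` of a type-A Kleinian singularity over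
a field of characteristic `p > 2`, with `η` a primitive `r`-th root of unity, `r` coprime
to `p`, the elements `x^{pr}` and `y^{pr}` are central. -/
theorem klein_pow_central {k : Type*} [Field k] (p : ℕ) [Fact p.Prime] [CharP k p]
    (hp2 : 2 < p) (r : ℕ) (hr : 1 < r) (hrp : Nat.Coprime r p)
    (η : k) (hη : IsPrimitiveRoot η r) (c : ℕ → k) :
    RingQuot.mkRingHom (KleinRel k r η c) (FreeAlgebra.ι k (0 : Fin 3)) ^ (p * r) ∈
      Set.center (RingQuot (KleinRel k r η c)) ∧
    RingQuot.mkRingHom (KleinRel k r η c) (FreeAlgebra.ι k (1 : Fin 3)) ^ (p * r) ∈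
      Set.center (RingQuot (KleinRel k r η c)) := by
  have hη0 : η ≠ 0 := hη.ne_zero (by omega)
  have hηr : η ^ r = 1 := hη.pow_eq_one
  set A := RingQuot.mkAlgHom k (KleinRel k r η c) with hAdef
  have hA : ∀ a, RingQuot.mkRingHom (KleinRel k r η c) a = A a := fun a => by
    rw [hAdef, ← RingQuot.mkAlgHom_coe k (KleinRel k r η c)]; rfl
  set X := A (FreeAlgebra.ι k (0 : Fin 3)) with hXdef
  set Y := A (FreeAlgebra.ι k (1 : Fin 3)) with hYdef
  set G := A (FreeAlgebra.ι k (2 : Fin 3)) with hGdef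
  -- the relations in the quotient
  have rel1 : G ^ r = 1 := by
    have h := RingQuot.mkAlgHom_rel k (KleinRel.pow (k := k) (r := r) (η := η) (c := c))
    simp only [map_pow, map_one] at h
    exact h
  have rel2 : G * X = η • (X * G) := by
    have h := RingQuot.mkAlgHom_rel k (KleinRel.gx (k := k) (r := r) (η := η) (c := c))
    simp only [map_mul, map_smul, AlgHom.commutes, ← Algebra.smul_def] at h
    exact h
  have rel3 : η • (G * Y) = Y * G := by
    have h := RingQuot.mkAlgHom_rel k (KleinRel.gy (k := k) (r := r) (η := η) (c := c))
    simp only [map_mul, map_smul, AlgHom.commutes, ← Algebra.smul_def] at h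
    exact h
  have rel3' : G * Y = η⁻¹ • (Y * G) := by
    rw [← rel3, smul_smul, inv_mul_cancel₀ hη0, one_smul]
  have rel4 : Y * X = X * Y + 1 - ∑ j ∈ Finset.Icc 1 (r - 1), c j • G ^ j := by
    have h := RingQuot.mkAlgHom_rel k (KleinRel.comm (k := k) (r := r) (η := η) (c := c))
    simp only [map_mul, map_add, map_sub, map_one, map_sum, map_pow, map_smul,
      AlgHom.commutes, ← Algebra.smul_def] at h
    exact h
  -- commutation of powers of γ with powers of x and y
  have Lgx : ∀ n, G * X ^ n = η ^ n • (X ^ n * G) := by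
    intro n; induction n with
    | zero => simp
    | succ n ih =>
      rw [pow_succ, ← mul_assoc, ih, smul_mul_assoc, mul_assoc, rel2, mul_smul_comm,
        smul_smul, ← mul_assoc, ← pow_succ, ← pow_succ]
  have Lgy : ∀ n, G * Y ^ n = (η⁻¹) ^ n • (Y ^ n * G) := by
    intro n; induction n with
    | zero => simp
    | succ n ih =>
      rw [pow_succ, ← mul_assoc, ih, smul_mul_assoc, mul_assoc, rel3', mul_smul_comm,
        smul_smul, ← mul_assoc, ← pow_succ, ← pow_succ]
  have Lgx1j : ∀ j, G ^ j * X = η ^ j • (X * G ^ j) := by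
    intro j; induction j with
    | zero => simp
    | succ j ih =>
      rw [pow_succ, mul_assoc, rel2, mul_smul_comm, ← mul_assoc, ih, smul_mul_assoc,
        smul_smul, ← pow_succ', mul_assoc, ← pow_succ]
  have Lgy2 : ∀ j m, G ^ j * Y ^ m = ((η⁻¹) ^ m) ^ j • (Y ^ m * G ^ j) := by
    intro j m; induction j with
    | zero => simp
    | succ j ih =>
      rw [pow_succ, mul_assoc, Lgy m, mul_smul_comm, ← mul_assoc, ih, smul_mul_assoc,
        smul_smul, ← pow_succ', mul_assoc, ← pow_succ]
  -- the commutator formula [y, x^{n+1}]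
  have SA : ∀ n, Y * X ^ (n + 1) = X ^ (n + 1) * Y + ((n + 1 : ℕ) : k) • X ^ n
      - ∑ j ∈ Finset.Icc 1 (r - 1),
          (c j * ∑ i ∈ Finset.range (n + 1), (η ^ j) ^ i) • (X ^ n * G ^ j) := by
    intro n; induction n with
    | zero => simpa [Finset.sum_range_one] using rel4
    | succ n ih =>
      have h1 : Y * X ^ (n + 1 + 1) = Y * X ^ (n + 1) * X := by
        rw [pow_succ, ← mul_assoc]
      have h2 : X ^ (n + 1) * Y * X = X ^ (n + 1 + 1) * Y + X ^ (n + 1)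
          - ∑ j ∈ Finset.Icc 1 (r - 1), c j • (X ^ (n + 1) * G ^ j) := by
        rw [mul_assoc, rel4, mul_sub, mul_add, mul_one, Finset.mul_sum, ← mul_assoc,
          ← pow_succ]
        simp only [mul_smul_comm]
      have h4 : ∑ j ∈ Finset.Icc 1 (r - 1),
            ((c j * ∑ i ∈ Finset.range (n + 1), (η ^ j) ^ i) • (X ^ n * G ^ j)) * X
          = ∑ j ∈ Finset.Icc 1 (r - 1),
            ((c j * ∑ i ∈ Finset.range (n + 1), (η ^ j) ^ i) * η ^ j)
              • (X ^ (n + 1) * G ^ j) := by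
        refine Finset.sum_congr rfl fun j _ => ?_
        rw [smul_mul_assoc, mul_assoc, Lgx1j j, mul_smul_comm, smul_smul, ← mul_assoc,
          ← pow_succ]
      have h5 : ∑ j ∈ Finset.Icc 1 (r - 1),
            (c j * ∑ i ∈ Finset.range (n + 1 + 1), (η ^ j) ^ i) • (X ^ (n + 1) * G ^ j)
          = ∑ j ∈ Finset.Icc 1 (r - 1), c j • (X ^ (n + 1) * G ^ j)
            + ∑ j ∈ Finset.Icc 1 (r - 1),
              ((c j * ∑ i ∈ Finset.range (n + 1), (η ^ j) ^ i) * η ^ j)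
                • (X ^ (n + 1) * G ^ j) := by
        rw [← Finset.sum_add_distrib]
        refine Finset.sum_congr rfl fun j _ => ?_
        rw [← add_smul, geom_sum_succ]
        congr 1; ring
      rw [h1, ih, sub_mul, add_mul, smul_mul_assoc, Finset.sum_mul, h2, h4, ← pow_succ, h5]
      push_cast
      module
  -- the commutator formula [y^{n+1}, x]
  have SB : ∀ n, Y ^ (n + 1) * X = X * Y ^ (n + 1) + ((n + 1 : ℕ) : k) • Y ^ n
      - ∑ j ∈ Finset.Icc 1 (r - 1),
          (c j * ∑ i ∈ Finset.range (n + 1), ((η⁻¹) ^ j) ^ i) • (Y ^ n * G ^ j) := by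
    intro n; induction n with
    | zero => simpa [Finset.sum_range_one] using rel4
    | succ n ih =>
      have h1 : Y ^ (n + 1 + 1) * X = Y * (Y ^ (n + 1) * X) := by
        rw [pow_succ', mul_assoc]
      have h2 : Y * (X * Y ^ (n + 1)) = X * Y ^ (n + 1 + 1) + Y ^ (n + 1)
          - ∑ j ∈ Finset.Icc 1 (r - 1),
              (c j * ((η⁻¹) ^ (n + 1)) ^ j) • (Y ^ (n + 1) * G ^ j) := by
        rw [← mul_assoc, rel4, sub_mul, add_mul, one_mul, mul_assoc, ← pow_succ',
          Finset.sum_mul]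
        congr 1
        refine Finset.sum_congr rfl fun j _ => ?_
        rw [smul_mul_assoc, Lgy2 j (n + 1), smul_smul]
      have h3 : ∑ j ∈ Finset.Icc 1 (r - 1),
            Y * ((c j * ∑ i ∈ Finset.range (n + 1), ((η⁻¹) ^ j) ^ i) • (Y ^ n * G ^ j))
          = ∑ j ∈ Finset.Icc 1 (r - 1),
            (c j * ∑ i ∈ Finset.range (n + 1), ((η⁻¹) ^ j) ^ i)
              • (Y ^ (n + 1) * G ^ j) := by
        refine Finset.sum_congr rfl fun j _ => ?_
        rw [mul_smul_comm, ← mul_assoc, ← pow_succ']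
      have h5 : ∑ j ∈ Finset.Icc 1 (r - 1),
            (c j * ∑ i ∈ Finset.range (n + 1 + 1), ((η⁻¹) ^ j) ^ i)
              • (Y ^ (n + 1) * G ^ j)
          = ∑ j ∈ Finset.Icc 1 (r - 1),
              (c j * ∑ i ∈ Finset.range (n + 1), ((η⁻¹) ^ j) ^ i)
                • (Y ^ (n + 1) * G ^ j)
            + ∑ j ∈ Finset.Icc 1 (r - 1),
                (c j * ((η⁻¹) ^ (n + 1)) ^ j) • (Y ^ (n + 1) * G ^ j) := by
        rw [← Finset.sum_add_distrib]
        refine Finset.sum_congr rfl fun j _ => ?_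
        rw [← add_smul, Finset.sum_range_succ]
        congr 1; ring
      rw [h1, ih, mul_sub, mul_add, mul_smul_comm, ← pow_succ', Finset.mul_sum, h2, h3, h5]
      push_cast
      module
  -- vanishing of the geometric sums and of p·r in characteristic p
  have hcast : ((p * r : ℕ) : k) = 0 := by
    rw [Nat.cast_mul, CharP.cast_eq_zero, zero_mul]
  have hne : ∀ j, j ∈ Finset.Icc 1 (r - 1) → η ^ j ≠ 1 := by
    intro j hj h
    rw [Finset.mem_Icc] at hj
    have hd := (hη.pow_eq_one_iff_dvd j).mp h
    have := Nat.le_of_dvd (by omega) hd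
    omega
  have hpowj : ∀ j : ℕ, (η ^ j) ^ (p * r) = 1 := by
    intro j
    rw [← pow_mul, show j * (p * r) = r * (j * p) by ring, pow_mul, hηr, one_pow]
  have Szero : ∀ j, j ∈ Finset.Icc 1 (r - 1) →
      (∑ i ∈ Finset.range (p * r), (η ^ j) ^ i) = 0 := by
    intro j hj
    rw [geom_sum_eq (hne j hj), hpowj, sub_self, zero_div]
  have Tzero : ∀ j, j ∈ Finset.Icc 1 (r - 1) →
      (∑ i ∈ Finset.range (p * r), ((η⁻¹) ^ j) ^ i) = 0 := by
    intro j hj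
    have h1 : (η⁻¹) ^ j ≠ 1 := by
      rw [inv_pow]
      intro h
      exact hne j hj (inv_eq_one.mp h)
    rw [geom_sum_eq h1, inv_pow, inv_pow, hpowj, inv_one, sub_self, zero_div]
  have hηpr : η ^ (p * r) = 1 := by rw [mul_comm, pow_mul, hηr, one_pow]
  have hinvpr : (η⁻¹) ^ (p * r) = 1 := by rw [inv_pow, hηpr, inv_one]
  obtain ⟨m, hm⟩ : ∃ m, p * r = m + 1 := by
    have : 0 < p * r := Nat.mul_pos (by omega) (by omega)
    exact ⟨p * r - 1, by omega⟩
  -- x^{pr} and y^{pr} commute with the generators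
  have hYX : Y * X ^ (p * r) = X ^ (p * r) * Y := by
    rw [hm, SA m]
    have hc0 : ((m + 1 : ℕ) : k) = 0 := by rw [← hm]; exact hcast
    have hsum : ∑ j ∈ Finset.Icc 1 (r - 1),
        (c j * ∑ i ∈ Finset.range (m + 1), (η ^ j) ^ i) • (X ^ m * G ^ j) = 0 := by
      refine Finset.sum_eq_zero fun j hj => ?_
      rw [← hm, Szero j hj, mul_zero, zero_smul]
    rw [hc0, hsum, zero_smul, add_zero, sub_zero]
  have hYpX : Y ^ (p * r) * X = X * Y ^ (p * r) := by
    rw [hm, SB m]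
    have hc0 : ((m + 1 : ℕ) : k) = 0 := by rw [← hm]; exact hcast
    have hsum : ∑ j ∈ Finset.Icc 1 (r - 1),
        (c j * ∑ i ∈ Finset.range (m + 1), ((η⁻¹) ^ j) ^ i) • (Y ^ m * G ^ j) = 0 := by
      refine Finset.sum_eq_zero fun j hj => ?_
      rw [← hm, Tzero j hj, mul_zero, zero_smul]
    rw [hc0, hsum, zero_smul, add_zero, sub_zero]
  have hGX : G * X ^ (p * r) = X ^ (p * r) * G := by rw [Lgx, hηpr, one_smul]
  have hGY : G * Y ^ (p * r) = Y ^ (p * r) * G := by rw [Lgy, hinvpr, one_smul]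
  -- an element commuting with the generators is central
  have central : ∀ z : RingQuot (KleinRel k r η c),
      X * z = z * X → Y * z = z * Y → G * z = z * G →
        z ∈ Set.center (RingQuot (KleinRel k r η c)) := by
    intro z h0 h1 h2
    rw [Semigroup.mem_center_iff]
    intro g
    obtain ⟨a, rfl⟩ := RingQuot.mkRingHom_surjective (KleinRel k r η c) g
    rw [hA a]
    induction a using FreeAlgebra.induction with
    | grade0 t => rw [AlgHom.commutes]; exact Algebra.commutes t z
    | grade1 i =>
      fin_cases i
      · exact h0
      · exact h1
      · exact h2
    | mul a b ha hb => rw [map_mul, mul_assoc, hb, ← mul_assoc, ha, mul_assoc]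
    | add a b ha hb => rw [map_add, add_mul, mul_add, ha, hb]
  constructor
  · rw [hA]
    exact central _ ((Commute.refl X).pow_right _).eq hYX hGX
  · rw [hA]
    exact central _ hYpX.symm ((Commute.refl Y).pow_right _).eq hGY
end

section
/- Let P be a height-one prime ideal of Z₀ = B ⊗ C, where B and C are polynomial rings over a field, regarded as subrings of Z₀. Then P ∩ B = 0 or P ∩ C = 0. -/
open TensorProduct

set_option maxHeartbeats 2000000
set_option synthInstance.maxHeartbeats 400000

/-- Let `B`, `C` be polynomial rings over a field `k`, `Z₀ = B ⊗_k C`, and `P` a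
height-one prime ideal of `Z₀` (nonzero, and every prime strictly below it is zero).
Then `P ∩ B = 0` or `P ∩ C = 0`. -/
theorem height_one_prime_tensor {k : Type*} [Field k] (ι κ : Type*)
    (P : Ideal (MvPolynomial ι k ⊗[k] MvPolynomial κ k))
    (hP : P.IsPrime) (hP0 : P ≠ ⊥)
    (hht : ∀ Q : Ideal (MvPolynomial ι k ⊗[k] MvPolynomial κ k),
      Q.IsPrime → Q < P → Q = ⊥) :
    Ideal.comap (Algebra.TensorProduct.includeLeft (R := k) (S := k)
      (A := MvPolynomial ι k) (B := MvPolynomial κ k)).toRingHom P = ⊥ ∨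
    Ideal.comap (Algebra.TensorProduct.includeRight (R := k)
      (A := MvPolynomial ι k) (B := MvPolynomial κ k)).toRingHom P = ⊥ := by
  by_contra h
  push_neg at h
  obtain ⟨hp, hq⟩ := h
  set B := MvPolynomial ι k
  set C := MvPolynomial κ k
  set p : Ideal B := Ideal.comap (Algebra.TensorProduct.includeLeft (R := k) (S := k)
      (A := B) (B := C)).toRingHom P with hpdef
  set q : Ideal C := Ideal.comap (Algebra.TensorProduct.includeRight (R := k)
      (A := B) (B := C)).toRingHom P with hqdef
  have hpprime : p.IsPrime := Ideal.IsPrime.comap _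
  -- the map `B ⊗ C → (B ⧸ p) ⊗ C`
  set f : B →ₐ[k] B ⧸ p := Ideal.Quotient.mkₐ k p with hfdef
  have hfsurj : Function.Surjective f := Ideal.Quotient.mkₐ_surjective k p
  set φ : B ⊗[k] C →ₐ[k] (B ⧸ p) ⊗[k] C :=
    Algebra.TensorProduct.map f (AlgHom.id k C) with hφdef
  have hker : RingHom.ker φ = p.map (Algebra.TensorProduct.includeLeft (R := k) (S := k)
      (A := B) (B := C)) := by
    rw [Algebra.TensorProduct.rTensor_ker f hfsurj]
    congr 1
    rw [hfdef]
    exact Ideal.Quotient.mkₐ_ker k p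
  -- the codomain is a domain via `MvPolynomial κ (B ⧸ p)`
  have hinj : Function.Injective
      (MvPolynomial.algebraTensorAlgEquiv (R := k) (σ := κ) (B ⧸ p)) :=
    (MvPolynomial.algebraTensorAlgEquiv (R := k) (σ := κ) (B ⧸ p)).injective
  haveI : IsDomain ((B ⧸ p) ⊗[k] C) :=
    (MvPolynomial.algebraTensorAlgEquiv (R := k) (σ := κ)
      (B ⧸ p))|> fun e => Function.Injective.isDomain e.toRingEquiv.toRingHom e.injective
  set Q : Ideal (B ⊗[k] C) := RingHom.ker φ with hQdef
  have hQprime : Q.IsPrime := by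
    have hD : IsDomain ((B ⧸ p) ⊗[k] C) := inferInstance
    exact @RingHom.ker_isPrime _ _ (B ⊗[k] C →+* (B ⧸ p) ⊗[k] C) _ _ hD _ _ φ.toRingHom
  -- Q ≤ P
  have hQle : Q ≤ P := by
    rw [hker]
    exact Ideal.map_le_iff_le_comap.mpr le_rfl
  -- Q ≠ ⊥ : take a nonzero element of p
  obtain ⟨b, hbp, hb0⟩ := Submodule.exists_mem_ne_zero_of_ne_bot hp
  have hbQ : (Algebra.TensorProduct.includeLeft (R := k) (S := k) (A := B) (B := C)) b ∈ Q := by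
    rw [hker]
    exact Ideal.mem_map_of_mem _ hbp
  have hQne : Q ≠ ⊥ := by
    intro hbot
    rw [hbot, Ideal.mem_bot, Algebra.TensorProduct.includeLeft_apply] at hbQ
    have h1 := congrArg (MvPolynomial.algebraTensorAlgEquiv (R := k) (σ := κ) B) hbQ
    rw [MvPolynomial.algebraTensorAlgEquiv_tmul, map_one, Algebra.smul_def, mul_one,
      MvPolynomial.algebraMap_eq, map_zero] at h1
    exact hb0 (MvPolynomial.C_injective κ B (h1.trans (map_zero _).symm))
  -- Q < P : take a nonzero element of q; it lies in P but not in Q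
  obtain ⟨c, hcq, hc0⟩ := Submodule.exists_mem_ne_zero_of_ne_bot hq
  have hcP : (Algebra.TensorProduct.includeRight (R := k) (A := B) (B := C)) c ∈ P := hcq
  have hcQ : (Algebra.TensorProduct.includeRight (R := k) (A := B) (B := C)) c ∉ Q := by
    intro hc
    rw [hQdef, RingHom.mem_ker] at hc
    have hc' : (1 : B ⧸ p) ⊗ₜ[k] c = 0 := by
      simpa [hφdef, Algebra.TensorProduct.map_tmul] using hc
    have := congrArg (MvPolynomial.algebraTensorAlgEquiv (R := k) (σ := κ) (B ⧸ p)) hc'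
    rw [map_zero, MvPolynomial.algebraTensorAlgEquiv_tmul, one_smul] at this
    have hmapinj : Function.Injective (MvPolynomial.map (σ := κ) (algebraMap k (B ⧸ p))) :=
      MvPolynomial.map_injective _ (algebraMap k (B ⧸ p)).injective
    exact hc0 (hmapinj (this.trans (map_zero _).symm))
  have hQlt : Q < P := lt_of_le_of_ne hQle (fun hEq => hcQ (hEq ▸ hcP))
  exact hQne (hht Q hQprime hQlt)
end
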